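/- arXiv:2605.01438 — 2 statements merged into one kernel-verified Lean document; each statement's English description precedes it below -/
import Mathlib

section
/- Let α_{u,b} be real coefficients with ∑_{u,b} α_{u,b} P_{u,b} = O, where for each u, {P_{u,b}}_b are positive semidefinite operators summing to the identity. Set m_u = max_b |α_{u,b}| and L = ∑_u m_u, and define the sampling law q(u) = m_u/L when m_u > 0 (and 0 otherwise). Then for every density operator ρ, the second-moment operator M = ∑_{u,b} (α_{u,b}²/q(u)) P_{u,b} (omitting terms with q(u)=0) satisfies tr(ρ M) ≤ L², and hence the variance tr(ρ M) − tr(ρ O)² is at most L². -/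
/-!
For a state ρ, each setting u turns into a probability distribution p(u, b) = re tr(ρ P_{u,b})
on its outcomes. Since α_{u,b}² / q(u) ≤ m_u² / q(u) = m_u L, the second moment
re tr(ρ M) = ∑_{u,b} (α_{u,b}² / q(u)) p(u, b) is at most ∑_u m_u L = L², and subtracting a square
only lowers it.
-/

open Matrix ComplexOrder

namespace Matrix

variable {𝕜 n : Type*} [RCLike 𝕜] [Fintype n]

theorem PosSemidef.trace_mul_nonneg {A B : Matrix n n 𝕜} (hA : A.PosSemidef)
    (hB : B.PosSemidef) : 0 ≤ (A * B).trace := by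
  classical
  open scoped MatrixOrder in
  obtain ⟨C, rfl⟩ := CStarAlgebra.nonneg_iff_eq_star_mul_self.mp hB.nonneg
  rw [star_eq_conjTranspose, ← mul_assoc, trace_mul_comm, ← mul_assoc]
  exact (hA.mul_mul_conjTranspose_same C).trace_nonneg

theorem re_trace_mul_sum {ι : Type*} (s : Finset ι) (A : Matrix n n ℂ) (B : ι → Matrix n n ℂ) :
    (A * ∑ i ∈ s, B i).trace.re = ∑ i ∈ s, (A * B i).trace.re := by
  rw [Matrix.mul_sum, trace_sum, Complex.re_sum]

theorem re_trace_mul_ofReal_smul (A B : Matrix n n ℂ) (c : ℝ) :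
    (A * ((c : ℂ) • B)).trace.re = c * (A * B).trace.re := by
  rw [Matrix.mul_smul, trace_smul, smul_eq_mul, Complex.re_ofReal_mul]

theorem sum_re_trace_mul_eq_one {ι : Type*} [Fintype ι] [DecidableEq n] {ρ : Matrix n n ℂ}
    (hρ : ρ.trace = 1) {P : ι → Matrix n n ℂ} (hP : ∑ i, P i = 1) :
    ∑ i, (ρ * P i).trace.re = 1 := by
  rw [← Complex.re_sum, ← trace_sum, ← Matrix.mul_sum, hP, mul_one, hρ, Complex.one_re]

end Matrix

-- For `m = 0` the junk value `a ^ 2 / 0 = 0` plays the role of omitting settings with `q u = 0`.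
theorem sq_div_div_le_mul {a m L : ℝ} (ha : |a| ≤ m) (hL : 0 ≤ L) :
    a ^ 2 / (m / L) ≤ m * L := by
  rcases (abs_nonneg a).trans ha |>.eq_or_lt with rfl | hm
  · simp [abs_nonpos_iff.mp ha]
  rw [div_div_eq_mul_div, div_le_iff₀ hm]
  have : a ^ 2 ≤ m ^ 2 := sq_le_sq' (abs_le.mp ha).1 (abs_le.mp ha).2
  nlinarith

theorem sum_sum_sq_div_le_sq {U : Type*} [Fintype U] {B : U → Type*} [∀ u, Fintype (B u)]
    (p α : (u : U) → B u → ℝ) (hp : ∀ u b, 0 ≤ p u b) (hp1 : ∀ u, ∑ b, p u b = 1)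
    (m : U → ℝ) (hαm : ∀ u b, |α u b| ≤ m u) {L : ℝ} (hL : L = ∑ u, m u) (hL0 : 0 ≤ L) :
    ∑ u, ∑ b, α u b ^ 2 / (m u / L) * p u b ≤ L ^ 2 :=
  calc ∑ u, ∑ b, α u b ^ 2 / (m u / L) * p u b
      ≤ ∑ u, ∑ b, m u * L * p u b := by
        gcongr with u _ b _
        · exact hp u b
        · exact sq_div_div_le_mul (hαm u b) hL0
    _ = L ^ 2 := by
        simp_rw [← Finset.mul_sum, hp1, mul_one, ← Finset.sum_mul, ← hL, sq]

theorem oasis_surrogate_upper_bounds_variance_general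
    {d : ℕ} {U : Type*} [Fintype U]
    {B : U → Type*} [∀ u, Fintype (B u)] [∀ u, Nonempty (B u)]
    (P : (u : U) → B u → Matrix (Fin d) (Fin d) ℂ)
    (hP_psd : ∀ u b, (P u b).PosSemidef)
    (hP_sum : ∀ u, ∑ b, P u b = 1)
    (O : Matrix (Fin d) (Fin d) ℂ)
    (α : (u : U) → B u → ℝ)
    (m : U → ℝ) (hm : ∀ u, m u = Finset.univ.sup' Finset.univ_nonempty (fun b => |α u b|))
    (L : ℝ) (hL : L = ∑ u, m u) (hLpos : 0 < L)
    (q : U → ℝ) (hq : ∀ u, q u = m u / L)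
    (M : Matrix (Fin d) (Fin d) ℂ)
    (hM : M = ∑ u, ∑ b, ((α u b ^ 2 / q u : ℝ) : ℂ) • P u b)
    (ρ : Matrix (Fin d) (Fin d) ℂ) (hρ : ρ.PosSemidef) (hρ1 : ρ.trace = 1) :
    ((ρ * M).trace).re ≤ L ^ 2 ∧
    ((ρ * M).trace).re - ((ρ * O).trace).re ^ 2 ≤ L ^ 2 := by
  have hαm : ∀ u b, |α u b| ≤ m u := fun u b =>
    hm u ▸ Finset.le_sup' (fun b => |α u b|) (Finset.mem_univ b)
  have hρM : ((ρ * M).trace).re ≤ L ^ 2 := by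
    simp only [hM, re_trace_mul_sum, re_trace_mul_ofReal_smul, hq]
    exact sum_sum_sq_div_le_sq (fun u b => (ρ * P u b).trace.re) α
      (fun u b => (RCLike.nonneg_iff.mp (hρ.trace_mul_nonneg (hP_psd u b))).1)
      (fun u => sum_re_trace_mul_eq_one hρ1 (hP_sum u)) m hαm hL hLpos.le
  exact ⟨hρM, (sub_le_self _ (sq_nonneg _)).trans hρM⟩

theorem oasis_surrogate_upper_bounds_variance
    {d : ℕ} {U : Type*} [Fintype U] [Nonempty U]
    {B : U → Type*} [∀ u, Fintype (B u)] [∀ u, Nonempty (B u)]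
    (P : (u : U) → B u → Matrix (Fin d) (Fin d) ℂ)
    (hP_psd : ∀ u b, (P u b).PosSemidef)
    (hP_sum : ∀ u, ∑ b, P u b = 1)
    (O : Matrix (Fin d) (Fin d) ℂ) (hO : O.IsHermitian)
    (α : (u : U) → B u → ℝ)
    (hunb : ∑ u, ∑ b, (α u b : ℂ) • P u b = O)
    (m : U → ℝ) (hm : ∀ u, m u = Finset.univ.sup' Finset.univ_nonempty (fun b => |α u b|))
    (L : ℝ) (hL : L = ∑ u, m u) (hLpos : 0 < L)
    (q : U → ℝ) (hq : ∀ u, q u = m u / L)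
    (M : Matrix (Fin d) (Fin d) ℂ)
    (hM : M = ∑ u, ∑ b, ((α u b ^ 2 / q u : ℝ) : ℂ) • P u b)
    (ρ : Matrix (Fin d) (Fin d) ℂ) (hρ : ρ.PosSemidef) (hρ1 : ρ.trace = 1) :
    ((ρ * M).trace).re ≤ L ^ 2 ∧
    ((ρ * M).trace).re - ((ρ * O).trace).re ^ 2 ≤ L ^ 2 :=
  oasis_surrogate_upper_bounds_variance_general P hP_psd hP_sum O α m hm L hL hLpos q hq M hM ρ hρ
    hρ1
end

section
/- Let M be a Hermitian operator and O a rank-one orthogonal projection on a finite-dimensional complex Hilbert space. Then sup over density operators ρ of (tr(ρ M) − tr(ρ O)²) equals min over t ∈ ℝ of (λ_max(M − 2tO) + t²). -/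
open Matrix ComplexOrder

noncomputable def lamMax {d : ℕ} (A : Matrix (Fin d) (Fin d) ℂ) : ℝ :=
  sSup {r : ℝ | ∃ v : Fin d → ℂ, v ≠ 0 ∧ A *ᵥ v = (r : ℂ) • v}

/-!
Weak duality is the pointwise bound `tr(ρM) - q² ≤ tr(ρ(M - 2tO)) + t² ≤ λ_max(M - 2tO) + t²`
for `q = tr(ρO)`, which is `(t - q)² ≥ 0`. For the reverse inequality take `ρ*` maximizing
`tr(ρM) - tr(ρO)²` over the compact convex set of density matrices, and `t = tr(ρ*O)`.
Along a segment from `ρ*` the objective is a concave quadratic whose first-order term is the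
change of the linearisation `tr(ρ(M - 2tO))`, so `ρ*` maximizes that linearisation too. Its
maximum over density matrices is `λ_max(M - 2tO)`, hence the bound is attained at `(ρ*, t)`.
-/

theorem IsMaxOn.isMaxOn_sub_two_mul_of_sub_sq {E : Type*} [AddCommGroup E] [Module ℝ E]
    {s : Set E} (hs : Convex ℝ s) (a q : E →ₗ[ℝ] ℝ) {x : E} (hx : x ∈ s)
    (hmax : IsMaxOn (fun y => a y - q y ^ 2) s x) :
    IsMaxOn (fun y => a y - 2 * q x * q y) s x := by
  rw [isMaxOn_iff] at hmax ⊢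
  intro y hy
  set δ := a y - 2 * q x * q y - (a x - 2 * q x * q x)
  set c := (q y - q x) ^ 2
  have hsegment (τ : ℝ) (hτ : 0 < τ) (hτ1 : τ ≤ 1) : τ * δ ≤ τ ^ 2 * c := by
    have := hmax _ (hs.add_smul_sub_mem hx hy ⟨hτ.le, hτ1⟩)
    simp only [map_add, map_smul, map_sub, smul_eq_mul] at this
    linarith
  suffices δ ≤ 0 by linarith
  by_contra! hδ
  have hc : 0 ≤ c := sq_nonneg _
  set τ := δ / (δ + c)
  have hτ : 0 < τ := by positivity
  have hτ1 : τ ≤ 1 := (div_le_one (by positivity)).2 (by linarith)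
  have hτc : τ * c * (δ + c) = δ * c := by
    rw [mul_right_comm, div_mul_cancel₀ _ (by positivity)]
  have : δ ≤ τ * c := le_of_mul_le_mul_left (by linarith [hsegment τ hτ hτ1]) hτ
  nlinarith

def densityMatrices (n 𝕜 : Type*) [Fintype n] [RCLike 𝕜] : Set (Matrix n n 𝕜) :=
  {ρ | ρ.PosSemidef ∧ ρ.trace = 1}

noncomputable def Matrix.reTraceMulRight {n 𝕜 : Type*} [Fintype n] [RCLike 𝕜]
    (A : Matrix n n 𝕜) : Matrix n n 𝕜 →ₗ[ℝ] ℝ :=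
  RCLike.reLm ∘ₗ (traceLinearMap n 𝕜 𝕜).restrictScalars ℝ ∘ₗ
    LinearMap.mulRight ℝ A

section Density

variable {n 𝕜 : Type*} [RCLike 𝕜]

theorem Matrix.PosSemidef.norm_apply_sq_le {A : Matrix n n 𝕜} (hA : A.PosSemidef) (i j : n) :
    (‖A i j‖ ^ 2 : 𝕜) ≤ A i i * A j j := by
  have h := (hA.submatrix ![i, j]).det_nonneg
  rw [det_fin_two] at h
  simp only [submatrix_apply, Matrix.cons_val_zero, Matrix.cons_val_one] at h
  rw [← hA.1.apply j i, RCLike.star_def, RCLike.mul_conj] at h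
  exact sub_nonneg.1 h

variable [Fintype n]

@[simp]
theorem Matrix.reTraceMulRight_apply (A ρ : Matrix n n 𝕜) :
    A.reTraceMulRight ρ = RCLike.re (ρ * A).trace :=
  rfl

theorem Matrix.reTraceMulRight_sub_smul (A B ρ : Matrix n n 𝕜) (c : ℝ) :
    (A - c • B).reTraceMulRight ρ = A.reTraceMulRight ρ - c * B.reTraceMulRight ρ := by
  simp [mul_sub, trace_sub, RCLike.smul_re]

variable (n 𝕜) in
theorem convex_densityMatrices : Convex ℝ (densityMatrices n 𝕜) := by
  rintro ρ ⟨hρ, hρ1⟩ σ ⟨hσ, hσ1⟩ a b ha hb hab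
  refine ⟨(hρ.smul ha).add (hσ.smul hb), ?_⟩
  rw [trace_add, trace_smul, trace_smul, hρ1, hσ1, ← add_smul, hab, one_smul]

theorem norm_apply_le_one_of_mem_densityMatrices {ρ : Matrix n n 𝕜}
    (hρ : ρ ∈ densityMatrices n 𝕜) (i j : n) : ‖ρ i j‖ ≤ 1 := by
  obtain ⟨hρ, hρ1⟩ := hρ
  have hdiag (k : n) : ρ k k ≤ 1 :=
    hρ1 ▸ Finset.single_le_sum (f := fun l => ρ l l) (fun l _ => hρ.diag_nonneg)
      (Finset.mem_univ k)
  have h : ‖ρ i j‖ ^ 2 ≤ 1 := by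
    exact_mod_cast (hρ.norm_apply_sq_le i j).trans
      (mul_le_one₀ (hdiag i) hρ.diag_nonneg (hdiag j))
  nlinarith [norm_nonneg (ρ i j)]

theorem isClosed_setOf_posSemidef : IsClosed {A : Matrix n n 𝕜 | A.PosSemidef} := by
  simp_rw [posSemidef_iff_dotProduct_mulVec, Set.ofPred_and, Set.ofPred_forall]
  exact (isClosed_eq continuous_id.matrix_conjTranspose continuous_id).inter <|
    isClosed_iInter fun x => isClosed_le continuous_const <|
      continuous_const.dotProduct (continuous_id.matrix_mulVec continuous_const)

variable (n 𝕜) in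
theorem isCompact_densityMatrices : IsCompact (densityMatrices n 𝕜) := by
  have hclosed : IsClosed (densityMatrices n 𝕜) :=
    isClosed_setOf_posSemidef.inter (isClosed_eq continuous_id.matrix_trace continuous_const)
  refine (isCompact_univ_pi fun _ => isCompact_univ_pi fun _ =>
    isCompact_closedBall (0 : 𝕜) 1).of_isClosed_subset hclosed fun ρ hρ i _ j _ => ?_
  simpa using norm_apply_le_one_of_mem_densityMatrices hρ i j

theorem Matrix.PosSemidef.trace_mul_nonneg_s8 {A B : Matrix n n 𝕜}
    (hA : A.PosSemidef) (hB : B.PosSemidef) : 0 ≤ (A * B).trace := by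
  classical
  open scoped MatrixOrder in
  obtain ⟨S, hS, rfl⟩ : ∃ S : Matrix n n 𝕜, S.IsHermitian ∧ A = S * S :=
    ⟨CFC.sqrt A, (CFC.sqrt_nonneg A).posSemidef.1, (CFC.sqrt_mul_sqrt_self A hA.nonneg).symm⟩
  have h := (hB.conjTranspose_mul_mul_same S).trace_nonneg
  rwa [hS.eq, trace_mul_comm, ← mul_assoc] at h

variable [DecidableEq n]

theorem Matrix.IsHermitian.re_trace_mul_le_of_forall_eigenvalues_le {A ρ : Matrix n n 𝕜}
    (hA : A.IsHermitian) (hρ : ρ ∈ densityMatrices n 𝕜) {r : ℝ}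
    (hr : ∀ i, hA.eigenvalues i ≤ r) : RCLike.re (ρ * A).trace ≤ r := by
  open scoped MatrixOrder in
  have hle : A ≤ algebraMap ℝ (Matrix n n 𝕜) r := by
    refine le_algebraMap_of_spectrum_le (fun x hx => ?_) hA.isSelfAdjoint
    obtain ⟨i, rfl⟩ := hA.spectrum_real_eq_range_eigenvalues ▸ hx
    exact hr i
  have h := (RCLike.nonneg_iff.1 (hρ.1.trace_mul_nonneg_s8 hle)).1
  rw [mul_sub, trace_sub, Algebra.algebraMap_eq_smul_one, mul_smul_comm, mul_one, trace_smul,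
    hρ.2, map_sub] at h
  simpa [sub_nonneg, RCLike.smul_re] using h

theorem Matrix.IsHermitian.exists_mem_densityMatrices_trace_mul_eq {A : Matrix n n 𝕜}
    (hA : A.IsHermitian) (i : n) :
    ∃ ρ ∈ densityMatrices n 𝕜, (ρ * A).trace = hA.eigenvalues i := by
  set w : n → 𝕜 := ⇑(hA.eigenvectorBasis i)
  have hw : w ⬝ᵥ star w = 1 := by
    rw [← EuclideanSpace.inner_eq_star_dotProduct, inner_self_eq_norm_sq_to_K,
      hA.eigenvectorBasis.orthonormal.1 i, RCLike.ofReal_one, one_pow]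
  refine ⟨vecMulVec w (star w),
    ⟨posSemidef_vecMulVec_self_star w, by rw [trace_vecMulVec, hw]⟩, ?_⟩
  have hrow : star w ᵥ* A = star (A *ᵥ w) := by rw [star_mulVec, hA.eq]
  rw [vecMulVec_mul, trace_vecMulVec, hrow, hA.mulVec_eigenvectorBasis]
  change w ⬝ᵥ star (hA.eigenvalues i • w) = _
  rw [star_smul, star_trivial, dotProduct_smul, hw, RCLike.real_smul_eq_coe_mul, mul_one]

theorem Matrix.IsHermitian.exists_mulVec_eq_smul_iff {A : Matrix n n 𝕜}
    (hA : A.IsHermitian) (r : ℝ) :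
    (∃ v : n → 𝕜, v ≠ 0 ∧ A *ᵥ v = (r : 𝕜) • v) ↔ r ∈ Set.range hA.eigenvalues := by
  rw [← hA.spectrum_real_eq_range_eigenvalues, spectrum.mem_iff, isUnit_iff_isUnit_det,
    isUnit_iff_ne_zero, not_not, ← exists_mulVec_eq_zero_iff,
    Algebra.algebraMap_eq_smul_one]
  simp only [sub_mulVec, smul_mulVec, one_mulVec, sub_eq_zero,
    RCLike.real_smul_eq_coe_smul (K := 𝕜), eq_comm]

end Density

section LamMax

variable {d : ℕ} {A : Matrix (Fin d) (Fin d) ℂ}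

theorem Matrix.IsHermitian.isGreatest_range_eigenvalues_lamMax (hd : 0 < d)
    (hA : A.IsHermitian) : IsGreatest (Set.range hA.eigenvalues) (lamMax A) := by
  have : Nonempty (Fin d) := ⟨⟨0, hd⟩⟩
  have hset : {r : ℝ | ∃ v : Fin d → ℂ, v ≠ 0 ∧ A *ᵥ v = (r : ℂ) • v} =
      Set.range hA.eigenvalues :=
    Set.ext hA.exists_mulVec_eq_smul_iff
  rw [lamMax, hset]
  exact ⟨(Set.range_nonempty _).csSup_mem (Set.finite_range _),
    fun _ h => le_csSup (Set.finite_range _).bddAbove h⟩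

theorem Matrix.IsHermitian.isGreatest_reTraceMulRight_image_lamMax (hd : 0 < d)
    (hA : A.IsHermitian) :
    IsGreatest (A.reTraceMulRight '' densityMatrices (Fin d) ℂ) (lamMax A) := by
  obtain ⟨⟨i, hi⟩, hmax⟩ := hA.isGreatest_range_eigenvalues_lamMax hd
  obtain ⟨ρ, hρ, htr⟩ := hA.exists_mem_densityMatrices_trace_mul_eq i
  refine ⟨⟨ρ, hρ, by rw [reTraceMulRight_apply, htr, RCLike.ofReal_re, hi]⟩, ?_⟩
  rintro _ ⟨σ, hσ, rfl⟩
  exact hA.re_trace_mul_le_of_forall_eigenvalues_le hσ fun j => hmax ⟨j, rfl⟩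

end LamMax

theorem exact_spectral_minimax_identity_general
    {d : ℕ} (hd : 0 < d)
    (M O : Matrix (Fin d) (Fin d) ℂ)
    (hM : M.IsHermitian) (hO : O.IsHermitian) :
    sSup {x : ℝ | ∃ ρ : Matrix (Fin d) (Fin d) ℂ, ρ.PosSemidef ∧ ρ.trace = 1 ∧
        x = ((ρ * M).trace).re - ((ρ * O).trace).re ^ 2}
      = ⨅ t : ℝ, (lamMax (M - (2 * t : ℝ) • O) + t ^ 2) := by
  have hlamMax (t : ℝ) :=
    (hM.sub (hO.smul (.all (2 * t)))).isGreatest_reTraceMulRight_image_lamMax hd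
  obtain ⟨ρ, hρ, hmax⟩ := (isCompact_densityMatrices (Fin d) ℂ).exists_isMaxOn
    (f := fun σ => M.reTraceMulRight σ - O.reTraceMulRight σ ^ 2)
    (hlamMax 0).nonempty.of_image (by fun_prop)
  set t := O.reTraceMulRight ρ
  have hlin := hmax.isMaxOn_sub_two_mul_of_sub_sq (convex_densityMatrices (Fin d) ℂ)
    M.reTraceMulRight O.reTraceMulRight hρ
  have hval : lamMax (M - (2 * t : ℝ) • O) = M.reTraceMulRight ρ - 2 * t * t := by
    refine (hlamMax t).unique ⟨⟨ρ, hρ, reTraceMulRight_sub_smul ..⟩, ?_⟩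
    rintro _ ⟨σ, hσ, rfl⟩
    rw [reTraceMulRight_sub_smul]
    exact hlin hσ
  have hinf : IsLeast (Set.range fun s : ℝ => lamMax (M - (2 * s : ℝ) • O) + s ^ 2)
      (M.reTraceMulRight ρ - t ^ 2) := by
    refine ⟨⟨t, by dsimp only; rw [hval]; ring⟩, ?_⟩
    rintro _ ⟨s, rfl⟩
    have := (hlamMax s).2 ⟨ρ, hρ, rfl⟩
    rw [reTraceMulRight_sub_smul] at this
    nlinarith [sq_nonneg (s - t)]
  refine IsGreatest.csSup_eq ?_ |>.trans hinf.csInf_eq.symm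
  refine ⟨⟨ρ, hρ.1, hρ.2, rfl⟩, ?_⟩
  rintro _ ⟨σ, hσ, hσ1, rfl⟩
  exact hmax ⟨hσ, hσ1⟩

theorem exact_spectral_minimax_identity
    {d : ℕ} (hd : 0 < d)
    (M O : Matrix (Fin d) (Fin d) ℂ)
    (hM : M.IsHermitian) (hO : O.IsHermitian)
    (hOproj : O * O = O) (hOrank : O.trace = 1) :
    sSup {x : ℝ | ∃ ρ : Matrix (Fin d) (Fin d) ℂ, ρ.PosSemidef ∧ ρ.trace = 1 ∧
        x = ((ρ * M).trace).re - ((ρ * O).trace).re ^ 2}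
      = ⨅ t : ℝ, (lamMax (M - (2 * t : ℝ) • O) + t ^ 2) :=
  exact_spectral_minimax_identity_general hd M O hM hO
end
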